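/- arXiv:1010.6131 — 2 statements merged into one kernel-verified Lean document; each statement's English description precedes it below -/
import Mathlib

section
/- Let H be a connected graph with distinct vertices a, b, c, and let H' be obtained from H by adding four new vertices x, u_1, v_1, x_1 together with the edges a u_1, u_1 x, x v_1, v_1 b, x x_1, and x_1 c (and no other new edges). Then rc(H') ≤ rc(H) + 2. -/
open SimpleGraph

/-- The rainbow connection number of a graph `G`: the least `k` such that the edges of `G`
can be coloured with colours `0, …, k-1` so that any two distinct vertices are joined by a
path whose edges receive pairwise distinct colours. -/
noncomputable def rc {V : Type*} (G : SimpleGraph V) : ℕ :=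
  sInf {k : ℕ | ∃ c : Sym2 V → ℕ, (∀ e ∈ G.edgeSet, c e < k) ∧
    ∀ u v : V, u ≠ v → ∃ p : G.Walk u v, p.IsPath ∧ (p.edges.map c).Nodup}

/-!
Given a rainbow colouring of `H` with `k` colours, give the new edges `a u₁` and `x v₁` the
colour `k` and the other four new edges the colour `k + 1`. Every new vertex then reaches `H`
along a short path in new colours only, and `u₁` reaches `v₁` and `x₁` through `H` by a path
that starts with colour `k` and ends with colour `k + 1`.

Because `rc` is `0` when no rainbow colouring with finitely many colours exists (for some
infinite graphs), one also needs the converse transfer: from a rainbow colouring of the new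
graph, collapse the new vertices onto `a` and give the edges of fixed walks in `H` from `a` to
`b` and from `a` to `c` fresh colours.
-/

namespace SimpleGraph

variable {V W : Type*}

def IsRainbowPath {G : SimpleGraph V} (c : Sym2 V → ℕ) {u v : V} (p : G.Walk u v) : Prop :=
  p.IsPath ∧ (p.edges.map c).Nodup

def RainbowConnected (G : SimpleGraph V) (c : Sym2 V → ℕ) (u v : V) : Prop :=
  ∃ p : G.Walk u v, IsRainbowPath c p

def IsRainbowColoring (G : SimpleGraph V) (c : Sym2 V → ℕ) (k : ℕ) : Prop :=
  (∀ e ∈ G.edgeSet, c e < k) ∧ ∀ u v, u ≠ v → G.RainbowConnected c u v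

theorem rc_eq_sInf (G : SimpleGraph V) : rc G = sInf {k | ∃ c, G.IsRainbowColoring c k} := rfl

theorem rc_le_add_of_transfer {G : SimpleGraph V} {G' : SimpleGraph W} (n : ℕ)
    (hup : ∀ c k, G.IsRainbowColoring c k → ∃ c', G'.IsRainbowColoring c' (k + n))
    (hdown : ∀ c' k', G'.IsRainbowColoring c' k' → ∃ c k, G.IsRainbowColoring c k) :
    rc G' ≤ rc G + n := by
  rw [rc_eq_sInf, rc_eq_sInf]
  rcases Set.eq_empty_or_nonempty {k | ∃ c, G.IsRainbowColoring c k} with hG | hG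
  · have hG' : {k' | ∃ c', G'.IsRainbowColoring c' k'} = ∅ :=
      Set.eq_empty_of_forall_notMem fun k' ⟨c', hc'⟩ =>
        let ⟨c, k, hc⟩ := hdown c' k' hc'
        hG.subset ⟨c, hc⟩
    simp [hG']
  · obtain ⟨c, hc⟩ := Nat.sInf_mem hG
    obtain ⟨c', hc'⟩ := hup c _ hc
    exact Nat.sInf_le ⟨c', hc'⟩

section RainbowPath

variable {G : SimpleGraph V} {c : Sym2 V → ℕ} {u v w : V}

theorem IsRainbowPath.nil : IsRainbowPath c (Walk.nil : G.Walk u u) := ⟨.nil, by simp⟩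

theorem IsRainbowPath.cons {h : G.Adj u v} {p : G.Walk v w} (hp : IsRainbowPath c p)
    (hu : u ∉ p.support) (hc : c s(u, v) ∉ p.edges.map c) : IsRainbowPath c (.cons h p) :=
  ⟨hp.1.cons hu, List.nodup_cons.2 ⟨hc, hp.2⟩⟩

theorem IsRainbowPath.concat {p : G.Walk u v} {h : G.Adj v w} (hp : IsRainbowPath c p)
    (hw : w ∉ p.support) (hc : c s(v, w) ∉ p.edges.map c) : IsRainbowPath c (p.concat h) := by
  refine ⟨hp.1.concat hw h, ?_⟩
  rw [Walk.edges_concat, List.concat_eq_append, List.map_append]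
  exact hp.2.append (List.nodup_singleton _) (by simpa using hc)

theorem IsRainbowPath.reverse {p : G.Walk u v} (hp : IsRainbowPath c p) :
    IsRainbowPath c p.reverse :=
  ⟨hp.1.reverse, by simpa [Walk.edges_reverse] using hp.2⟩

theorem IsRainbowPath.map {G' : SimpleGraph W} (f : G ↪g G') {c' : Sym2 W → ℕ}
    (hc : ∀ e, c' (e.map f) = c e) {p : G.Walk u v} (hp : IsRainbowPath c p) :
    IsRainbowPath c' (p.map f.toHom) := by
  refine ⟨hp.1.map f.injective, ?_⟩
  rw [Walk.edges_map, List.map_map]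
  convert hp.2 using 1
  exact List.map_congr_left fun e _ => hc e

theorem RainbowConnected.symm (h : G.RainbowConnected c u v) : G.RainbowConnected c v u :=
  let ⟨p, hp⟩ := h
  ⟨p.reverse, hp.reverse⟩

theorem RainbowConnected.of_adj (h : G.Adj u v) : G.RainbowConnected c u v :=
  ⟨.cons h .nil, IsRainbowPath.nil.cons (by simp [h.ne]) (by simp)⟩

end RainbowPath

theorem Walk.exists_walk_of_forall_adj {G : SimpleGraph V} {G' : SimpleGraph W} (f : V → W)
    (π : W → V) (F : Set (Sym2 V))
    (hstep : ∀ x y, G'.Adj x y →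
      ∃ q : G.Walk (π x) (π y), ∀ e ∈ q.edges, e ∈ F ∨ e.map f = s(x, y))
    {x y : W} (w : G'.Walk x y) :
    ∃ q : G.Walk (π x) (π y), ∀ e ∈ q.edges, e ∈ F ∨ e.map f ∈ w.edges := by
  induction w with
  | nil => exact ⟨.nil, by simp⟩
  | cons h w ih =>
    obtain ⟨q₁, hq₁⟩ := hstep _ _ h
    obtain ⟨q₂, hq₂⟩ := ih
    refine ⟨q₁.append q₂, fun e he => ?_⟩
    rw [Walk.edges_append, List.mem_append] at he
    rw [Walk.edges_cons, List.mem_cons]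
    rcases he with he | he
    · exact (hq₁ e he).imp_right Or.inl
    · exact (hq₂ e he).imp_right Or.inr

def pullbackWithFreshColors [DecidableEq V] (f : V → W) (F : List (Sym2 V))
    (c' : Sym2 W → ℕ) (k' : ℕ) (e : Sym2 V) : ℕ :=
  if e ∈ F then k' + F.idxOf e else c' (e.map f)

theorem pullbackWithFreshColors_injOn [DecidableEq V] {f : V → W} (hf : f.Injective)
    (F : List (Sym2 V)) {c' : Sym2 W → ℕ} {k' : ℕ} {E : List (Sym2 W)} (hE : (E.map c').Nodup)
    (hlt : ∀ e ∈ E, c' e < k') :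
    Set.InjOn (pullbackWithFreshColors f F c' k') {e | e ∈ F ∨ e.map f ∈ E} := by
  intro e₁ he₁ e₂ he₂ heq
  unfold pullbackWithFreshColors at heq
  by_cases h₁ : e₁ ∈ F <;> by_cases h₂ : e₂ ∈ F <;>
    simp only [h₁, h₂, if_true, if_false] at heq
  · exact (List.idxOf_inj h₁).1 (Nat.add_left_cancel heq)
  · have := hlt _ (he₂.resolve_left h₂); omega
  · have := hlt _ (he₁.resolve_left h₁); omega
  · exact Sym2.map.injective hf
      (List.inj_on_of_nodup_map hE (he₁.resolve_left h₁) (he₂.resolve_left h₂) heq)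

theorem IsRainbowColoring.pullbackWithFreshColors [DecidableEq V] {G : SimpleGraph V}
    {G' : SimpleGraph W} (f : G ↪g G') (π : W → V) (hπ : ∀ v, π (f v) = v)
    (F : List (Sym2 V))
    (hstep : ∀ x y, G'.Adj x y →
      ∃ q : G.Walk (π x) (π y), ∀ e ∈ q.edges, e ∈ F ∨ e.map f = s(x, y))
    {c' : Sym2 W → ℕ} {k' : ℕ} (hc' : G'.IsRainbowColoring c' k') :
    G.IsRainbowColoring (pullbackWithFreshColors f F c' k') (k' + F.length) := by
  refine ⟨fun e he => ?_, fun u v huv => ?_⟩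
  · unfold SimpleGraph.pullbackWithFreshColors
    split_ifs with hF
    · exact Nat.add_lt_add_left (List.idxOf_lt_length_iff.2 hF) _
    · exact (hc'.1 _ (f.map_mem_edgeSet_iff.2 he)).trans_le (Nat.le_add_right _ _)
  obtain ⟨w, hw, hwc⟩ := hc'.2 (f u) (f v) (f.injective.ne huv)
  obtain ⟨q, hq⟩ := Walk.exists_walk_of_forall_adj f π {e | e ∈ F} hstep w
  let q' : G.Walk u v := (q.copy (hπ u) (hπ v)).bypass
  have hq' : ∀ e ∈ q'.edges, e ∈ F ∨ e.map f ∈ w.edges := fun e he =>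
    hq e (by simpa using Walk.edges_bypass_subset_edges _ he)
  refine ⟨q', Walk.bypass_isPath _, List.Nodup.map_on ?_ (Walk.bypass_isPath _).edges_nodup⟩
  exact fun e₁ he₁ e₂ he₂ => pullbackWithFreshColors_injOn f.injective F hwc
    (fun e he => hc'.1 e (w.edges_subset_edgeSet he)) (hq' e₁ he₁) (hq' e₂ he₂)

open Sum

section SubdividedClaw

variable (H : SimpleGraph V) (a b c : V)

/-- The new vertices `x, u₁, v₁, x₁` are `inr 0, inr 1, inr 2, inr 3`. -/
def attachSubdividedClaw : SimpleGraph (V ⊕ Fin 4) :=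
  SimpleGraph.fromRel (fun u v : V ⊕ Fin 4 =>
    (∃ p q, u = Sum.inl p ∧ v = Sum.inl q ∧ H.Adj p q) ∨
    (u = Sum.inl a ∧ v = Sum.inr 1) ∨
    (u = Sum.inr 1 ∧ v = Sum.inr 0) ∨
    (u = Sum.inr 0 ∧ v = Sum.inr 2) ∨
    (u = Sum.inr 2 ∧ v = Sum.inl b) ∨
    (u = Sum.inr 0 ∧ v = Sum.inr 3) ∨
    (u = Sum.inr 3 ∧ v = Sum.inl c))

variable {H a b c}

@[simp]
theorem attachSubdividedClaw_adj_inl_inl {p q : V} :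
    (H.attachSubdividedClaw a b c).Adj (inl p) (inl q) ↔ H.Adj p q := by
  simpa [attachSubdividedClaw, H.adj_comm q p] using fun h : H.Adj p q => h.ne

theorem eq_or_eq_or_eq_of_attachSubdividedClaw_adj {p : V} {i : Fin 4}
    (h : (H.attachSubdividedClaw a b c).Adj (inl p) (inr i)) : p = a ∨ p = b ∨ p = c := by
  simp only [attachSubdividedClaw, fromRel_adj] at h
  aesop

namespace attachSubdividedClaw

theorem adj_a_u₁ : (H.attachSubdividedClaw a b c).Adj (inl a) (inr 1) := by
  simp [attachSubdividedClaw]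

theorem adj_u₁_x : (H.attachSubdividedClaw a b c).Adj (inr 1) (inr 0) := by
  simp [attachSubdividedClaw]

theorem adj_x_v₁ : (H.attachSubdividedClaw a b c).Adj (inr 0) (inr 2) := by
  simp [attachSubdividedClaw]

theorem adj_v₁_b : (H.attachSubdividedClaw a b c).Adj (inr 2) (inl b) := by
  simp [attachSubdividedClaw]

theorem adj_x_x₁ : (H.attachSubdividedClaw a b c).Adj (inr 0) (inr 3) := by
  simp [attachSubdividedClaw]

theorem adj_x₁_c : (H.attachSubdividedClaw a b c).Adj (inr 3) (inl c) := by
  simp [attachSubdividedClaw]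

end attachSubdividedClaw

open attachSubdividedClaw

variable (H a b c)

def attachSubdividedClaw.inlEmbedding : H ↪g H.attachSubdividedClaw a b c where
  toEmbedding := .inl
  map_rel_iff' := attachSubdividedClaw_adj_inl_inl

@[simp]
theorem attachSubdividedClaw.inlEmbedding_apply (p : V) :
    attachSubdividedClaw.inlEmbedding H a b c p = inl p :=
  rfl

variable {H a b c}

theorem exists_walk_edges_subset_of_eq_or_eq_or_eq (wb : H.Walk a b) (wc : H.Walk a c) {p : V}
    (hp : p = a ∨ p = b ∨ p = c) : ∃ q : H.Walk a p, q.edges ⊆ wb.edges ++ wc.edges := by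
  rcases hp with rfl | rfl | rfl
  · exact ⟨.nil, by simp⟩
  · exact ⟨wb, List.subset_append_left _ _⟩
  · exact ⟨wc, List.subset_append_right _ _⟩

theorem attachSubdividedClaw_exists_walk_of_adj (wb : H.Walk a b) (wc : H.Walk a c)
    {x y : V ⊕ Fin 4} (h : (H.attachSubdividedClaw a b c).Adj x y) :
    ∃ q : H.Walk (Sum.elim id (fun _ => a) x) (Sum.elim id (fun _ => a) y),
      ∀ e ∈ q.edges, e ∈ wb.edges ++ wc.edges ∨ e.map inl = s(x, y) := by
  rcases x with p | i <;> rcases y with q | j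
  · exact ⟨.cons (attachSubdividedClaw_adj_inl_inl.1 h) .nil,
      fun e he => .inr (by rw [List.mem_singleton.1 he]; rfl)⟩
  · obtain ⟨w, hw⟩ := exists_walk_edges_subset_of_eq_or_eq_or_eq wb wc
      (eq_or_eq_or_eq_of_attachSubdividedClaw_adj h)
    exact ⟨w.reverse, fun e he => .inl (hw (by simpa using he))⟩
  · obtain ⟨w, hw⟩ := exists_walk_edges_subset_of_eq_or_eq_or_eq wb wc
      (eq_or_eq_or_eq_of_attachSubdividedClaw_adj h.symm)
    exact ⟨w, fun e he => .inl (hw he)⟩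
  · exact ⟨.nil, by simp⟩

theorem exists_isRainbowColoring_of_attachSubdividedClaw (hH : H.Connected)
    {c' : Sym2 (V ⊕ Fin 4) → ℕ} {k' : ℕ}
    (hc' : (H.attachSubdividedClaw a b c).IsRainbowColoring c' k') :
    ∃ cH k, H.IsRainbowColoring cH k := by
  classical
  obtain ⟨wb⟩ := hH.preconnected a b
  obtain ⟨wc⟩ := hH.preconnected a c
  exact ⟨_, _, hc'.pullbackWithFreshColors (attachSubdividedClaw.inlEmbedding H a b c)
    (Sum.elim id fun _ => a) (fun _ => rfl) (wb.edges ++ wc.edges)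
    fun _ _ h => attachSubdividedClaw_exists_walk_of_adj wb wc h⟩

def clawColor (cH : Sym2 V → ℕ) (k : ℕ) : V ⊕ Fin 4 → V ⊕ Fin 4 → ℕ
  | inl p, inl q => cH s(p, q)
  | inl _, inr i | inr i, inl _ => if i = 1 then k else k + 1
  | inr i, inr j => if i = 2 ∨ j = 2 then k else k + 1

theorem clawColor_comm (cH : Sym2 V → ℕ) (k : ℕ) (x y : V ⊕ Fin 4) :
    clawColor cH k x y = clawColor cH k y x := by
  rcases x with p | i <;> rcases y with q | j <;> simp only [clawColor, or_comm, Sym2.eq_swap]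

def clawColoring (cH : Sym2 V → ℕ) (k : ℕ) : Sym2 (V ⊕ Fin 4) → ℕ :=
  Sym2.lift ⟨clawColor cH k, clawColor_comm cH k⟩

@[simp]
theorem clawColoring_mk (cH : Sym2 V → ℕ) (k : ℕ) (x y : V ⊕ Fin 4) :
    clawColoring cH k s(x, y) = clawColor cH k x y := rfl

theorem clawColoring_map_inl (cH : Sym2 V → ℕ) (k : ℕ) (e : Sym2 V) :
    clawColoring cH k (e.map inl) = cH e := by
  induction e using Sym2.ind with
  | _ p q => rfl

section Coloring

variable {cH : Sym2 V → ℕ} {k : ℕ} (hcH : H.IsRainbowColoring cH k)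
include hcH

theorem clawColoring_lt {e : Sym2 (V ⊕ Fin 4)}
    (he : e ∈ (H.attachSubdividedClaw a b c).edgeSet) :
    clawColoring cH k e < k + 2 := by
  induction e using Sym2.ind with
  | _ x y =>
    rcases x with p | i <;> rcases y with q | j <;> simp only [clawColoring_mk, clawColor]
    · exact (hcH.1 _ (attachSubdividedClaw_adj_inl_inl.1 he)).trans (by omega)
    all_goals split_ifs <;> omega

theorem exists_lifted_rainbowPath (s t : V) :
    ∃ p : (H.attachSubdividedClaw a b c).Walk (inl s) (inl t),
      IsRainbowPath (clawColoring cH k) p ∧ (∀ i, inr i ∉ p.support) ∧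
      ∀ n, k ≤ n → n ∉ p.edges.map (clawColoring cH k) := by
  obtain ⟨q, hq⟩ : H.RainbowConnected cH s t := by
    rcases eq_or_ne s t with rfl | hst
    · exact ⟨.nil, .nil⟩
    · exact hcH.2 s t hst
  let φ := attachSubdividedClaw.inlEmbedding H a b c
  have hsupp : ∀ i, inr i ∉ (q.map φ.toHom).support := fun i => by
    rw [Walk.support_map]
    simp [φ]
  have hnew : ∀ n, k ≤ n → n ∉ (q.map φ.toHom).edges.map (clawColoring cH k) := by
    intro n hn hmem
    simp only [Walk.edges_map, List.map_map, List.mem_map] at hmem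
    obtain ⟨e, he, rfl⟩ := hmem
    exact (hcH.1 e (q.edges_subset_edgeSet he)).not_ge
      (hn.trans_eq (clawColoring_map_inl cH k e))
  exact ⟨q.map φ.toHom, hq.map φ (clawColoring_map_inl cH k), hsupp, hnew⟩

theorem rainbowConnected_inr_inl (i : Fin 4) (w : V) :
    (H.attachSubdividedClaw a b c).RainbowConnected (clawColoring cH k) (inr i) (inl w) := by
  fin_cases i
  · obtain ⟨p, hp, hsupp, hnew⟩ := exists_lifted_rainbowPath (b := b) (c := c) hcH a w
    exact ⟨_, (hp.cons (h := adj_a_u₁.symm) (hsupp 1) (by simp [clawColor, hnew])).cons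
      (h := adj_u₁_x.symm) (by simp [hsupp]) (by simp [clawColor, hnew])⟩
  · obtain ⟨p, hp, hsupp, hnew⟩ := exists_lifted_rainbowPath (b := b) (c := c) hcH a w
    exact ⟨_, hp.cons (h := adj_a_u₁.symm) (hsupp 1) (by simp [clawColor, hnew])⟩
  · obtain ⟨p, hp, hsupp, hnew⟩ := exists_lifted_rainbowPath (a := a) (c := c) hcH b w
    exact ⟨_, hp.cons (h := adj_v₁_b) (hsupp 2) (by simp [clawColor, hnew])⟩
  · obtain ⟨p, hp, hsupp, hnew⟩ := exists_lifted_rainbowPath (a := a) (b := b) hcH c w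
    exact ⟨_, hp.cons (h := adj_x₁_c) (hsupp 3) (by simp [clawColor, hnew])⟩

theorem rainbowConnected_inr_inr {i j : Fin 4} (hij : i ≠ j) :
    (H.attachSubdividedClaw a b c).RainbowConnected (clawColoring cH k) (inr i) (inr j) := by
  wlog hlt : i < j generalizing i j
  · exact (this hij.symm (hij.symm.lt_of_le (not_lt.1 hlt))).symm
  fin_cases i <;> fin_cases j <;> try simp at hlt
  · exact .of_adj adj_u₁_x.symm
  · exact .of_adj adj_x_v₁
  · exact .of_adj adj_x_x₁
  · obtain ⟨p, hp, hsupp, hnew⟩ := exists_lifted_rainbowPath (c := c) hcH a b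
    exact ⟨_, (hp.concat (h := adj_v₁_b.symm) (hsupp 2) (by simp [clawColor, hnew])).cons
      (h := adj_a_u₁.symm) (by simp [hsupp]) (by simp [clawColor, hnew])⟩
  · obtain ⟨p, hp, hsupp, hnew⟩ := exists_lifted_rainbowPath (b := b) hcH a c
    exact ⟨_, (hp.concat (h := adj_x₁_c.symm) (hsupp 3) (by simp [clawColor, hnew])).cons
      (h := adj_a_u₁.symm) (by simp [hsupp]) (by simp [clawColor, hnew])⟩
  · exact ⟨_, (IsRainbowPath.nil.cons (h := adj_x_x₁) (by simp) (by simp)).cons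
      (h := adj_x_v₁.symm) (by simp) (by simp [clawColor])⟩

theorem isRainbowColoring_clawColoring :
    (H.attachSubdividedClaw a b c).IsRainbowColoring (clawColoring cH k) (k + 2) := by
  refine ⟨fun e he => clawColoring_lt hcH he, ?_⟩
  rintro (u | i) (v | j) huv
  · obtain ⟨p, hp, -⟩ := exists_lifted_rainbowPath (a := a) (b := b) (c := c) hcH u v
    exact ⟨p, hp⟩
  · exact (rainbowConnected_inr_inl hcH j u).symm
  · exact rainbowConnected_inr_inl hcH i v
  · exact rainbowConnected_inr_inr hcH (by simpa using huv)

end Coloring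

end SubdividedClaw

end SimpleGraph

theorem rc_case1_path_through_general {V : Type*} (H : SimpleGraph V) (hH : H.Connected)
    (a b c : V) :
    rc (SimpleGraph.fromRel (fun u v : V ⊕ Fin 4 =>
        (∃ p q, u = Sum.inl p ∧ v = Sum.inl q ∧ H.Adj p q) ∨
        (u = Sum.inl a ∧ v = Sum.inr 1) ∨
        (u = Sum.inr 1 ∧ v = Sum.inr 0) ∨
        (u = Sum.inr 0 ∧ v = Sum.inr 2) ∨
        (u = Sum.inr 2 ∧ v = Sum.inl b) ∨
        (u = Sum.inr 0 ∧ v = Sum.inr 3) ∨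
        (u = Sum.inr 3 ∧ v = Sum.inl c))) ≤ rc H + 2 :=
  rc_le_add_of_transfer 2
    (fun _ _ hcH => ⟨_, isRainbowColoring_clawColoring hcH⟩)
    fun _ _ hc' => exists_isRainbowColoring_of_attachSubdividedClaw hH hc'

/-- Let `H` be connected with distinct vertices `a, b, c`.  Add four new vertices
`x = Sum.inr 0`, `u₁ = Sum.inr 1`, `v₁ = Sum.inr 2`, `x₁ = Sum.inr 3` together with the
edges `a u₁, u₁ x, x v₁, v₁ b, x x₁, x₁ c` (and no other new edges).  Then
`rc(H') ≤ rc(H) + 2`. -/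
theorem rc_case1_path_through {V : Type*} (H : SimpleGraph V) (hH : H.Connected)
    (a b c : V) (hab : a ≠ b) (hac : a ≠ c) (hbc : b ≠ c) :
    rc (SimpleGraph.fromRel (fun u v : V ⊕ Fin 4 =>
        (∃ p q, u = Sum.inl p ∧ v = Sum.inl q ∧ H.Adj p q) ∨
        (u = Sum.inl a ∧ v = Sum.inr 1) ∨
        (u = Sum.inr 1 ∧ v = Sum.inr 0) ∨
        (u = Sum.inr 0 ∧ v = Sum.inr 2) ∨
        (u = Sum.inr 2 ∧ v = Sum.inl b) ∨
        (u = Sum.inr 0 ∧ v = Sum.inr 3) ∨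
        (u = Sum.inr 3 ∧ v = Sum.inl c))) ≤ rc H + 2 :=
  rc_case1_path_through_general H hH a b c
end

section
/- Let H be a connected graph and let H' be obtained from H by adding four new vertices x, v_1, x_1, x_2 together with the following new edges: two edges e_0, e_1 joining x to two distinct vertices of H; the edges x v_1 and v_1 b, where b is a vertex of H; three edges joining x_1 to three distinct vertices of H; and three edges joining x_2 to three distinct vertices of H. Then rc(H') ≤ rc(H) + 2. -/
/-!
Rainbow-colour `H` with `k` colours and give every new edge one of two fresh colours `k`, `k + 1`:
the edges at `x` into `H` and `v₁ b` get `k + 1`, the edge `x v₁` and the edges at `x₁` get `k`,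
and `x₂` gets `k` towards `e 0` and `k + 1` towards `e 1`, `e 2`. A new vertex reaches `H` by one
new edge followed by a rainbow path of `H`, and two new vertices are adjacent or are joined by
"new edge, rainbow path of `H`, new edge" with the two fresh colours.

If `H` has no rainbow colouring with finitely many colours (which can happen for infinite `H`), then
`rc H = 0` by the `sInf ∅ = 0` convention, and neither has `H'`: retract the new vertices onto `b`
and replace each new edge by a fixed path of `H` from its endpoint in `H` to `b`. A rainbow
colouring of `H'`, with the finitely many edges of these paths recoloured by distinct fresh colours,
is then a rainbow colouring of `H`.
-/

open SimpleGraph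

open Function Sum

namespace SimpleGraph

variable {α β : Type*}

def IsRainbowColouring (G : SimpleGraph α) (k : ℕ) (c : Sym2 α → ℕ) : Prop :=
  (∀ e ∈ G.edgeSet, c e < k) ∧
    ∀ u v : α, u ≠ v → ∃ p : G.Walk u v, p.IsPath ∧ (p.edges.map c).Nodup

theorem rc_le_of_isRainbowColouring {G : SimpleGraph α} {k : ℕ} {c : Sym2 α → ℕ}
    (h : G.IsRainbowColouring k c) : rc G ≤ k :=
  Nat.sInf_le ⟨c, h⟩

theorem exists_isRainbowColouring_rc {G : SimpleGraph α}
    (h : ∃ k c, G.IsRainbowColouring k c) : ∃ c, G.IsRainbowColouring (rc G) c :=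
  Nat.sInf_mem (s := {k | ∃ c, G.IsRainbowColouring k c}) h

theorem rc_eq_zero_of_forall_not_isRainbowColouring {G : SimpleGraph α}
    (h : ∀ k c, ¬ G.IsRainbowColouring k c) : rc G = 0 :=
  Nat.sInf_eq_zero.2 <| .inr <| Set.eq_empty_iff_forall_notMem.2 fun k ⟨c, hc⟩ => h k c hc

theorem Walk.exists_isPath_nodup_map_edges {κ : Type*} {G : SimpleGraph α} {u v : α}
    {c : Sym2 α → κ} (p : G.Walk u v) (hc : ∀ x ∈ p.edges, ∀ y ∈ p.edges, c x = c y → x = y) :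
    ∃ q : G.Walk u v, q.IsPath ∧ (q.edges.map c).Nodup := by
  classical
  have hsub := p.edges_bypass_subset_edges
  exact ⟨p.bypass, p.bypass_isPath, p.bypass_isPath.edges_nodup.map_on
    fun x hx y hy => hc x (hsub hx) y (hsub hy)⟩

theorem isRainbowColouring_of_walks {G : SimpleGraph α} {k : ℕ} {c : Sym2 α → ℕ}
    (hlt : ∀ e ∈ G.edgeSet, c e < k)
    (hwalk : ∀ u v, u ≠ v → ∃ p : G.Walk u v, (p.edges.map c).Nodup) :
    G.IsRainbowColouring k c := by
  refine ⟨hlt, fun u v huv => ?_⟩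
  obtain ⟨p, hp⟩ := hwalk u v huv
  exact p.exists_isPath_nodup_map_edges (List.inj_on_of_nodup_map hp)

theorem Walk.exists_walk_map_of_forall_adj {G : SimpleGraph α} {H : SimpleGraph β} (f : α → β)
    (g : β → α) (S : Set (Sym2 β))
    (hf : ∀ x y, G.Adj x y →
      ∃ w : H.Walk (f x) (f y), ∀ e ∈ w.edges, e ∈ S ∨ e.map g = s(x, y)) :
    ∀ {x y : α} (p : G.Walk x y),
      ∃ w : H.Walk (f x) (f y), ∀ e ∈ w.edges, e ∈ S ∨ e.map g ∈ p.edges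
  | _, _, .nil => ⟨.nil, by simp⟩
  | _, _, .cons h p => by
    obtain ⟨w₁, hw₁⟩ := hf _ _ h
    obtain ⟨w₂, hw₂⟩ := exists_walk_map_of_forall_adj f g S hf p
    refine ⟨w₁.append w₂, fun e he => ?_⟩
    rw [Walk.edges_append, List.mem_append] at he
    rcases he with he | he
    · exact (hw₁ e he).imp_right fun h => by simp [h]
    · exact (hw₂ e he).imp_right fun h => by simp [h]

theorem IsRainbowColouring.exists_of_retraction {G : SimpleGraph α} {H : SimpleGraph β}
    (g : H →g G) (f : α → β) (hfg : LeftInverse f g) (S : Finset (Sym2 β))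
    (hf : ∀ x y, G.Adj x y →
      ∃ w : H.Walk (f x) (f y), ∀ e ∈ w.edges, e ∈ S ∨ e.map g = s(x, y))
    {k : ℕ} {c : Sym2 α → ℕ} (hc : G.IsRainbowColouring k c) :
    ∃ k c, H.IsRainbowColouring k c := by
  classical
  have hg : Injective g := hfg.injective
  let c' : Sym2 β → ℕ := fun e => if h : e ∈ S then k + S.equivFin ⟨e, h⟩ else c (e.map g)
  refine ⟨k + S.card, c', fun e he => ?_, fun u v huv => ?_⟩
  · by_cases h : e ∈ S
    · simp [c', h]
    · simpa [c', h] using (hc.1 _ (g.map_mem_edgeSet he)).trans_le (Nat.le_add_right k _)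
  obtain ⟨p, -, hp⟩ := hc.2 (g u) (g v) (hg.ne huv)
  obtain ⟨w, hw⟩ := Walk.exists_walk_map_of_forall_adj f g S hf p
  refine (w.copy (hfg u) (hfg v)).exists_isPath_nodup_map_edges fun x hx y hy hxy => ?_
  rw [Walk.edges_copy] at hx hy
  have hlt : ∀ z, z ∉ S → z ∈ w.edges → c' z < k := fun z hzS hz => by
    simpa [c', hzS] using hc.1 _ (p.edges_subset_edgeSet ((hw z hz).resolve_left hzS))
  have hge : ∀ z ∈ S, k ≤ c' z := fun z hzS => by simp [c', hzS]
  by_cases hxS : x ∈ S <;> by_cases hyS : y ∈ S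
  · simpa [c', hxS, hyS, Fin.val_inj] using hxy
  · exact absurd hxy (by have := hge x hxS; have := hlt y hyS hy; omega)
  · exact absurd hxy (by have := hlt x hxS hx; have := hge y hyS; omega)
  · simp only [c', hxS, hyS, dite_false] at hxy
    exact Sym2.map.injective hg <| List.inj_on_of_nodup_map hp
      ((hw x hx).resolve_left hxS) ((hw y hy).resolve_left hyS) hxy

section Extension

variable {V W : Type*}

def extendColouring (c : Sym2 V → ℕ) (f : V → W → ℕ) (m : ℕ) : Sym2 (V ⊕ W) → ℕ :=
  Sym2.lift ⟨fun
    | inl p, inl q => c s(p, q)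
    | inl p, inr i => f p i
    | inr i, inl p => f p i
    | inr _, inr _ => m, by rintro (p | i) (q | j) <;> simp [Sym2.eq_swap]⟩

variable {c : Sym2 V → ℕ} {f : V → W → ℕ} {m : ℕ}

@[simp] theorem extendColouring_inr_inl (i : W) (p : V) :
    extendColouring c f m s(inr i, inl p) = f p i := rfl

@[simp] theorem extendColouring_map_inl (e : Sym2 V) :
    extendColouring c f m (e.map inl) = c e := by
  induction e using Sym2.ind with
  | _ p q => rfl

variable {H : SimpleGraph V} {G : SimpleGraph (V ⊕ W)}

theorem extendColouring_lt {n : ℕ} (hG : G.comap inl ≤ H)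
    (hc : ∀ e ∈ H.edgeSet, c e < n) (hf : ∀ p i, f p i < n) (hm : m < n) :
    ∀ e ∈ G.edgeSet, extendColouring c f m e < n := by
  rintro ⟨x | i, y | j⟩ he
  exacts [hc _ (hG he), hf _ _, hf _ _, hm]

variable {k : ℕ}

theorem exists_rainbow_walk_inl_inl (hG : H ≤ G.comap inl) (hc : H.IsRainbowColouring k c)
    (u v : V) :
    ∃ p : G.Walk (inl u) (inl v), (p.edges.map (extendColouring c f m)).Nodup ∧
      ∀ x ∈ p.edges.map (extendColouring c f m), x < k := by
  obtain rfl | huv := eq_or_ne u v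
  · exact ⟨.nil, by simp⟩
  obtain ⟨p, -, hpc⟩ := hc.2 u v huv
  let φ : H →g G := ⟨inl, fun h => hG h⟩
  have hcol : (p.map φ).edges.map (extendColouring c f m) = p.edges.map c := by
    rw [Walk.edges_map, List.map_map]
    exact List.map_congr_left fun e _ => extendColouring_map_inl e
  refine ⟨p.map φ, hcol ▸ hpc, hcol ▸ ?_⟩
  simp only [List.mem_map]
  rintro _ ⟨e, he, rfl⟩
  exact hc.1 e (p.edges_subset_edgeSet he)

theorem exists_rainbow_walk_inr_inl (hG : H ≤ G.comap inl) (hc : H.IsRainbowColouring k c) {i : W}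
    {a : V} (ha : G.Adj (inr i) (inl a)) (hk : k ≤ f a i) (v : V) :
    ∃ p : G.Walk (inr i) (inl v), (p.edges.map (extendColouring c f m)).Nodup := by
  obtain ⟨q, hq, hlt⟩ := exists_rainbow_walk_inl_inl (f := f) (m := m) hG hc a v
  refine ⟨.cons ha q, ?_⟩
  rw [Walk.edges_cons, List.map_cons, List.nodup_cons]
  exact ⟨fun h => (hlt _ h).not_ge (by simpa using hk), hq⟩

theorem exists_rainbow_walk_inr_inr (hG : H ≤ G.comap inl) (hc : H.IsRainbowColouring k c) {i j : W}
    {a b : V} (ha : G.Adj (inr i) (inl a)) (hb : G.Adj (inr j) (inl b)) (hka : k ≤ f a i)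
    (hkb : k ≤ f b j) (hab : f a i ≠ f b j) :
    ∃ p : G.Walk (inr i) (inr j), (p.edges.map (extendColouring c f m)).Nodup := by
  obtain ⟨q, hq, hlt⟩ := exists_rainbow_walk_inl_inl (f := f) (m := m) hG hc a b
  refine ⟨.cons ha (q.concat hb.symm), ?_⟩
  simp only [Walk.edges_cons, Walk.edges_concat, List.concat_eq_append, List.map_cons,
    List.map_append, List.map_nil, extendColouring_inr_inl, Sym2.eq_swap (a := inl b),
    List.nodup_cons, List.mem_append, List.mem_singleton, List.nodup_append]
  refine ⟨?_, hq, by simp, ?_⟩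
  · rintro (h | h)
    exacts [(hlt _ h).not_ge hka, hab h]
  · rintro x hx _ rfl rfl
    exact (hlt _ hx).not_ge hkb

end Extension

section Augment

variable {V : Type*}

def augment (H : SimpleGraph V) (c₀ c₁ b : V) (d e : Fin 3 → V) : SimpleGraph (V ⊕ Fin 4) :=
  SimpleGraph.fromRel (fun u v : V ⊕ Fin 4 =>
    (∃ p q, u = Sum.inl p ∧ v = Sum.inl q ∧ H.Adj p q) ∨
    (u = Sum.inl c₀ ∧ v = Sum.inr 0) ∨
    (u = Sum.inl c₁ ∧ v = Sum.inr 0) ∨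
    (u = Sum.inr 0 ∧ v = Sum.inr 1) ∨
    (u = Sum.inr 1 ∧ v = Sum.inl b) ∨
    (∃ j, u = Sum.inr 2 ∧ v = Sum.inl (d j)) ∨
    (∃ j, u = Sum.inr 3 ∧ v = Sum.inl (e j)))

variable {H : SimpleGraph V} {c₀ c₁ b : V} {d e : Fin 3 → V}

theorem comap_inl_augment : (augment H c₀ c₁ b d e).comap inl = H := by
  ext p q
  simp only [augment, comap_adj, fromRel_adj, ne_eq, inl.injEq, reduceCtorEq, false_and,
    and_false, or_false, exists_and_left, exists_eq_left']
  constructor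
  · rintro ⟨-, h | h⟩
    exacts [h, h.symm]
  · intro h
    exact ⟨h.ne, .inl h⟩

theorem augment_adj_inr_inl {i : Fin 4} {p : V} :
    (augment H c₀ c₁ b d e).Adj (inr i) (inl p) ↔
      (i = 0 ∧ (p = c₀ ∨ p = c₁)) ∨ (i = 1 ∧ p = b) ∨ (i = 2 ∧ ∃ j, p = d j) ∨
        (i = 3 ∧ ∃ j, p = e j) := by
  simp only [augment, fromRel_adj]
  aesop

theorem augment_isRainbowColouring [DecidableEq V] {k : ℕ} {c : Sym2 V → ℕ}
    (hc : H.IsRainbowColouring k c) (he : e 0 ≠ e 1) :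
    (augment H c₀ c₁ b d e).IsRainbowColouring (k + 2)
      (extendColouring c (fun p => ![k + 1, k + 1, k, if p = e 0 then k else k + 1]) k) := by
  set G := augment H c₀ c₁ b d e
  set f : V → Fin 4 → ℕ := fun p => ![k + 1, k + 1, k, if p = e 0 then k else k + 1]
  have hG : G.comap inl = H := comap_inl_augment
  refine isRainbowColouring_of_walks (extendColouring_lt hG.le
    (fun x hx => (hc.1 x hx).trans (by omega)) (fun p i => ?_) (by omega)) ?_
  · fin_cases i <;> simp [f]
    split_ifs <;> omega
  have h0 : G.Adj (inr 0) (inl c₀) := augment_adj_inr_inl.2 (by simp)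
  have h1 : G.Adj (inr 1) (inl b) := augment_adj_inr_inl.2 (by simp)
  have h2 : G.Adj (inr 2) (inl (d 0)) := augment_adj_inr_inl.2 (by simp)
  have h3 (j : Fin 3) : G.Adj (inr 3) (inl (e j)) := augment_adj_inr_inl.2 (by simp)
  have h01 : G.Adj (inr 0) (inr 1) := by simp [G, augment, fromRel_adj]
  have rev {x y : V ⊕ Fin 4} : (∃ p : G.Walk x y, (p.edges.map (extendColouring c f k)).Nodup) →
      ∃ p : G.Walk y x, (p.edges.map (extendColouring c f k)).Nodup := fun ⟨p, hp⟩ =>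
    ⟨p.reverse, by rwa [Walk.edges_reverse, List.map_reverse, List.nodup_reverse]⟩
  have toH (i : Fin 4) (v : V) :
      ∃ p : G.Walk (inr i) (inl v), (p.edges.map (extendColouring c f k)).Nodup := by
    fin_cases i
    exacts [exists_rainbow_walk_inr_inl hG.ge hc h0 (by simp [f]) v,
      exists_rainbow_walk_inr_inl hG.ge hc h1 (by simp [f]) v,
      exists_rainbow_walk_inr_inl hG.ge hc h2 (by simp [f]) v,
      exists_rainbow_walk_inr_inl hG.ge hc (h3 0) (by simp [f]) v]
  have between (i j : Fin 4) (hij : i < j) :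
      ∃ p : G.Walk (inr i) (inr j), (p.edges.map (extendColouring c f k)).Nodup := by
    fin_cases i <;> fin_cases j <;> simp at hij
    · exact ⟨.cons h01 .nil, by simp⟩
    · exact exists_rainbow_walk_inr_inr hG.ge hc h0 h2 (by simp [f]) (by simp [f]) (by simp [f])
    · exact exists_rainbow_walk_inr_inr hG.ge hc h0 (h3 0) (by simp [f]) (by simp [f]) (by simp [f])
    · exact exists_rainbow_walk_inr_inr hG.ge hc h1 h2 (by simp [f]) (by simp [f]) (by simp [f])
    · exact exists_rainbow_walk_inr_inr hG.ge hc h1 (h3 0) (by simp [f]) (by simp [f]) (by simp [f])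
    · exact exists_rainbow_walk_inr_inr hG.ge hc h2 (h3 1) (by simp [f]) (by simp [f, he.symm])
        (by simp [f, he.symm])
  rintro (u | i) (v | j) huv
  · obtain ⟨p, hp, -⟩ := exists_rainbow_walk_inl_inl hG.ge hc u v
    exact ⟨p, hp⟩
  · exact rev (toH j u)
  · exact toH i v
  · rcases lt_trichotomy i j with h | rfl | h
    exacts [between i j h, (huv rfl).elim, rev (between j i h)]

theorem IsRainbowColouring.exists_of_augment (hH : H.Connected) {k : ℕ}
    {c : Sym2 (V ⊕ Fin 4) → ℕ} (h : (augment H c₀ c₁ b d e).IsRainbowColouring k c) :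
    ∃ k c, H.IsRainbowColouring k c := by
  classical
  let P (a : V) : H.Walk a b := (hH.preconnected a b).some
  let T : Finset V := {c₀, c₁, b} ∪ Finset.univ.image d ∪ Finset.univ.image e
  let S : Finset (Sym2 V) := T.biUnion fun a => (P a).edges.toFinset
  have hT {i : Fin 4} {p : V} (hp : (augment H c₀ c₁ b d e).Adj (inr i) (inl p)) : p ∈ T := by
    rw [augment_adj_inr_inl] at hp
    aesop
  have hS {p : V} (hp : p ∈ T) : ∀ x ∈ (P p).edges, x ∈ S := fun x hx =>
    Finset.mem_biUnion.2 ⟨p, hp, List.mem_toFinset.2 hx⟩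
  let φ : H →g augment H c₀ c₁ b d e := ⟨inl, fun hpq => comap_inl_augment.ge hpq⟩
  refine h.exists_of_retraction φ (Sum.elim id fun _ => b) (fun _ => rfl) S ?_
  rintro (p | i) (q | j) hpq
  · have hpq : H.Adj p q := comap_inl_augment.le hpq
    refine ⟨hpq.toWalk, fun x hx => .inr ?_⟩
    change x ∈ hpq.toWalk.edges at hx
    rw [hpq.edges_toWalk, List.mem_singleton] at hx
    exact hx ▸ rfl
  · exact ⟨P p, fun x hx => .inl (hS (hT hpq.symm) x hx)⟩
  · exact ⟨(P q).reverse, fun x hx => .inl (hS (hT hpq) x (by simpa using hx))⟩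
  · exact ⟨.nil, by simp⟩

end Augment

end SimpleGraph

theorem rc_case3a_general {V : Type*} (H : SimpleGraph V) (hH : H.Connected)
    (c₀ c₁ b : V)
    (d : Fin 3 → V)
    (e : Fin 3 → V) (he : Function.Injective e) :
    rc (SimpleGraph.fromRel (fun u v : V ⊕ Fin 4 =>
        (∃ p q, u = Sum.inl p ∧ v = Sum.inl q ∧ H.Adj p q) ∨
        (u = Sum.inl c₀ ∧ v = Sum.inr 0) ∨
        (u = Sum.inl c₁ ∧ v = Sum.inr 0) ∨
        (u = Sum.inr 0 ∧ v = Sum.inr 1) ∨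
        (u = Sum.inr 1 ∧ v = Sum.inl b) ∨
        (∃ j, u = Sum.inr 2 ∧ v = Sum.inl (d j)) ∨
        (∃ j, u = Sum.inr 3 ∧ v = Sum.inl (e j)))) ≤ rc H + 2 := by
  classical
  change rc (augment H c₀ c₁ b d e) ≤ rc H + 2
  by_cases hc : ∃ k c, H.IsRainbowColouring k c
  · obtain ⟨c, hc⟩ := exists_isRainbowColouring_rc hc
    exact rc_le_of_isRainbowColouring (augment_isRainbowColouring hc (he.ne (by decide)))
  · rw [rc_eq_zero_of_forall_not_isRainbowColouring fun k c h => hc (h.exists_of_augment hH)]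
    exact Nat.zero_le _

/-- Case 3 (first subcase).  Add new vertices `x = Sum.inr 0`, `v₁ = Sum.inr 1`,
`x₁ = Sum.inr 2`, `x₂ = Sum.inr 3` to a connected graph `H`, with two edges `e₀, e₁`
joining `x` to distinct vertices `c₀, c₁` of `H`, the edges `x v₁` and `v₁ b` with
`b ∈ H`, three edges joining `x₁` to three distinct vertices `d 0, d 1, d 2` of `H`, and
three edges joining `x₂` to three distinct vertices `e 0, e 1, e 2` of `H`.  Then
`rc(H') ≤ rc(H) + 2`. -/
theorem rc_case3a {V : Type*} (H : SimpleGraph V) (hH : H.Connected)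
    (c₀ c₁ b : V) (hc : c₀ ≠ c₁)
    (d : Fin 3 → V) (hd : Function.Injective d)
    (e : Fin 3 → V) (he : Function.Injective e) :
    rc (SimpleGraph.fromRel (fun u v : V ⊕ Fin 4 =>
        (∃ p q, u = Sum.inl p ∧ v = Sum.inl q ∧ H.Adj p q) ∨
        (u = Sum.inl c₀ ∧ v = Sum.inr 0) ∨
        (u = Sum.inl c₁ ∧ v = Sum.inr 0) ∨
        (u = Sum.inr 0 ∧ v = Sum.inr 1) ∨
        (u = Sum.inr 1 ∧ v = Sum.inl b) ∨
        (∃ j, u = Sum.inr 2 ∧ v = Sum.inl (d j)) ∨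
        (∃ j, u = Sum.inr 3 ∧ v = Sum.inl (e j)))) ≤ rc H + 2 :=
  rc_case3a_general H hH c₀ c₁ b d e he
end
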